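/- arXiv:1901.10786 — 8 statements merged into one kernel-verified Lean document; each statement's English description precedes it below -/
import Mathlib

section
/- Let G be a group and let a, b ∈ G satisfy a*b^2 = b^3*a^2 and b*a^2 = a^3*b^2. Then b*a = 1. -/
theorem stmt_0 {G : Type*} [Group G] (a b : G)
    (h1 : a * b ^ 2 = b ^ 3 * a ^ 2) (h2 : b * a ^ 2 = a ^ 3 * b ^ 2) :
    b * a = 1 := by
  -- a*(b*a^2) = a^3*(b^3*a^2)
  have k1 : (a * b) * a ^ 2 = (a ^ 3 * b ^ 3) * a ^ 2 := by
    calc (a * b) * a ^ 2 = a * (b * a ^ 2) := by group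
      _ = a * (a ^ 3 * b ^ 2) := by rw [h2]
      _ = a ^ 3 * (a * b ^ 2) := by group
      _ = a ^ 3 * (b ^ 3 * a ^ 2) := by rw [h1]
      _ = (a ^ 3 * b ^ 3) * a ^ 2 := by group
  have hab : a * b = a ^ 3 * b ^ 3 := mul_right_cancel k1
  have k2 : (b * a) * b ^ 2 = (b ^ 3 * a ^ 3) * b ^ 2 := by
    calc (b * a) * b ^ 2 = b * (a * b ^ 2) := by group
      _ = b * (b ^ 3 * a ^ 2) := by rw [h1]
      _ = b ^ 3 * (b * a ^ 2) := by group
      _ = b ^ 3 * (a ^ 3 * b ^ 2) := by rw [h2]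
      _ = (b ^ 3 * a ^ 3) * b ^ 2 := by group
  have hba : b * a = b ^ 3 * a ^ 3 := mul_right_cancel k2
  -- deduce a^2 * b^2 = 1 and b^2 * a^2 = 1
  have e1 : b = a ^ 2 * b ^ 3 := by
    have : a * b = a * (a ^ 2 * b ^ 3) := by rw [hab]; group
    exact mul_left_cancel this
  have e2 : a = b ^ 2 * a ^ 3 := by
    have : b * a = b * (b ^ 2 * a ^ 3) := by rw [hba]; group
    exact mul_left_cancel this
  have hB : b ^ 2 * a ^ 2 = 1 := by
    calc b ^ 2 * a ^ 2 = (b ^ 2 * a ^ 3) * a⁻¹ := by group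
      _ = a * a⁻¹ := by rw [← e2]
      _ = 1 := by group
  have hb2 : b ^ 2 = (a ^ 2)⁻¹ := eq_inv_of_mul_eq_one_left hB
  have hbinv : b = a⁻¹ := by
    calc b = b * (b ^ 2 * a ^ 2) := by rw [hB, mul_one]
      _ = b ^ 3 * a ^ 2 := by group
      _ = a * b ^ 2 := h1.symm
      _ = a * (a ^ 2)⁻¹ := by rw [hb2]
      _ = a⁻¹ := by group
  rw [hbinv]; group
end

section
/- Let G be a group, let n be a positive integer not divisible by 3, and let a, b ∈ G satisfy a*b = b^2*a^2, b*a = a^2*b^2, and a^n = b^n. Then b*a = 1. -/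
private lemma aux_stmt2 {G : Type*} [Group G] (a b x y : G) (n : ℕ)
    (hn : 0 < n) (h3 : ¬ (3 ∣ n))
    (hx : x = y * x * y) (hy : y = x * y * x)
    (haya : a * y * a⁻¹ = x) (haxa : a * x * a⁻¹ = y * x⁻¹)
    (hbxb : b * x * b⁻¹ = y) (hbyb : b * y * b⁻¹ = x * y⁻¹)
    (hab : a ^ n = b ^ n) : y = 1 := by
  -- yx = (xy)^3
  have hyx : y * x = (x * y) ^ 3 := by
    rw [show (x*y)^3 = (x*y*x) * (y*x*y) by simp [pow_succ, mul_assoc], ← hy, ← hx]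
  -- t := x*y ; x⁻¹ t x = t^3
  have htx : x⁻¹ * (x*y) * x = (x*y)^3 := by
    rw [← hyx]; simp [pow_succ, mul_assoc]
  -- t^2 = x^2
  have ht2 : (x*y)^2 = x^2 := by
    calc (x*y)^2 = x * (y*x*y) := by simp [pow_succ, mul_assoc]
    _ = x * x := by rw [← hx]
    _ = x^2 := by simp [pow_succ, mul_assoc]
  -- t^4 = 1
  have h6 : (x*y)^6 = (x*y)^2 := by
    calc (x*y)^6 = (x⁻¹ * (x*y) * x)^2 := by rw [htx]; simp [pow_succ, mul_assoc]
    _ = x⁻¹ * (x*y)^2 * x := by simp [pow_succ, mul_assoc]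
    _ = x⁻¹ * x^2 * x := by rw [ht2]
    _ = x^2 := by simp [pow_succ, mul_assoc]
    _ = (x*y)^2 := ht2.symm
  have ht4 : (x*y)^4 = 1 := by
    calc (x*y)^4 = (x*y)^6 * ((x*y)^2)⁻¹ := by simp [pow_succ, mul_assoc]
    _ = (x*y)^2 * ((x*y)^2)⁻¹ := by rw [h6]
    _ = 1 := by simp [pow_succ, mul_assoc]
  -- y^2 = x^2
  have hy2 : y^2 = x^2 := by
    calc y^2 = y * (x*y*x) := by rw [← hy]; simp [pow_succ, mul_assoc]
    _ = (y*x) * (y*x) := by simp [pow_succ, mul_assoc]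
    _ = (x*y)^3 * (x*y)^3 := by rw [hyx]
    _ = (x*y)^2 * ((x*y)^4)^1 := by simp [pow_succ, mul_assoc]
    _ = (x*y)^2 := by rw [ht4]; simp [pow_succ, mul_assoc]
    _ = x^2 := ht2
  have hx4 : x^4 = 1 := by
    calc x^4 = (x^2)^2 := by simp [pow_succ, mul_assoc]
    _ = ((x*y)^2)^2 := by rw [ht2]
    _ = (x*y)^4 := by simp [pow_succ, mul_assoc]
    _ = 1 := ht4
  have hy4 : y^4 = 1 := by
    calc y^4 = (y^2)^2 := by simp [pow_succ, mul_assoc]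
    _ = (x^2)^2 := by rw [hy2]
    _ = x^4 := by simp [pow_succ, mul_assoc]
    _ = 1 := hx4
  -- x y⁻¹ x = y⁻¹ and y x⁻¹ y = x⁻¹
  have hxyx : x * y⁻¹ * x = y⁻¹ := by
    calc x * y⁻¹ * x = x * (x*y*x)⁻¹ * x := by rw [← hy]
    _ = y⁻¹ := by simp [pow_succ, mul_assoc]
  have hyxy : y * x⁻¹ * y = x⁻¹ := by
    calc y * x⁻¹ * y = y * (y*x*y)⁻¹ * y := by rw [← hx]
    _ = x⁻¹ := by simp [pow_succ, mul_assoc]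
  -- conjugation by a^2, a^3
  have ha2y : a^2 * y * (a^2)⁻¹ = y * x⁻¹ := by
    calc a^2 * y * (a^2)⁻¹ = a * (a*y*a⁻¹) * a⁻¹ := by simp [pow_succ, mul_assoc]
    _ = a * x * a⁻¹ := by rw [haya]
    _ = y * x⁻¹ := haxa
  have ha3y : a^3 * y * (a^3)⁻¹ = y := by
    calc a^3 * y * (a^3)⁻¹ = a * (a^2 * y * (a^2)⁻¹) * a⁻¹ := by simp [pow_succ, mul_assoc]
    _ = a * (y * x⁻¹) * a⁻¹ := by rw [ha2y]
    _ = (a*y*a⁻¹) * (a*x*a⁻¹)⁻¹ := by simp [pow_succ, mul_assoc]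
    _ = x * (y*x⁻¹)⁻¹ := by rw [haya, haxa]
    _ = x^2 * y⁻¹ := by simp [pow_succ, mul_assoc]
    _ = y^2 * y⁻¹ := by rw [← hy2]
    _ = y := by simp [pow_succ, mul_assoc]
  -- conjugation by b^2, b^3
  have hb2y : b^2 * y * (b^2)⁻¹ = y^2 * x⁻¹ := by
    calc b^2 * y * (b^2)⁻¹ = b * (b*y*b⁻¹) * b⁻¹ := by simp [pow_succ, mul_assoc]
    _ = b * (x*y⁻¹) * b⁻¹ := by rw [hbyb]
    _ = (b*x*b⁻¹) * (b*y*b⁻¹)⁻¹ := by simp [pow_succ, mul_assoc]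
    _ = y * (x*y⁻¹)⁻¹ := by rw [hbxb, hbyb]
    _ = y * (y * x⁻¹) := by simp [pow_succ, mul_assoc]
    _ = y^2 * x⁻¹ := by simp [pow_succ, mul_assoc]
  have hb3y : b^3 * y * (b^3)⁻¹ = y := by
    calc b^3 * y * (b^3)⁻¹ = b * (b^2 * y * (b^2)⁻¹) * b⁻¹ := by simp [pow_succ, mul_assoc]
    _ = b * (y^2 * x⁻¹) * b⁻¹ := by rw [hb2y]
    _ = (b*y*b⁻¹) * (b*y*b⁻¹) * (b*x*b⁻¹)⁻¹ := by simp [pow_succ, mul_assoc]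
    _ = (x*y⁻¹) * (x*y⁻¹) * y⁻¹ := by rw [hbyb, hbxb]
    _ = (x*y⁻¹*x) * y⁻¹ * y⁻¹ := by simp [pow_succ, mul_assoc]
    _ = y⁻¹ * y⁻¹ * y⁻¹ := by rw [hxyx]
    _ = y * (y^4)⁻¹ := by simp [pow_succ, mul_assoc]
    _ = y := by rw [hy4]; simp [pow_succ, mul_assoc]
  -- Commutation of a^3, b^3 with y
  have ca : Commute (a^3) y := by
    unfold Commute SemiconjBy
    conv_rhs => rw [← ha3y]
    simp [pow_succ, mul_assoc]
  have cb : Commute (b^3) y := by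
    unfold Commute SemiconjBy
    conv_rhs => rw [← hb3y]
    simp [pow_succ, mul_assoc]
  set q := n / 3 with hq
  set r := n % 3 with hr
  have hnq : n = r + 3 * q := by omega
  have cqa := ca.pow_left q
  have cqb := cb.pow_left q
  have hqa : (a^3)^q * y * ((a^3)^q)⁻¹ = y := by
    rw [cqa.eq]; simp [pow_succ, mul_assoc]
  have hqb : (b^3)^q * y * ((b^3)^q)⁻¹ = y := by
    rw [cqb.eq]; simp [pow_succ, mul_assoc]
  have ean : a ^ n = a ^ r * (a^3)^q := by
    rw [← pow_mul, ← pow_add, ← hnq]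
  have ebn : b ^ n = b ^ r * (b^3)^q := by
    rw [← pow_mul, ← pow_add, ← hnq]
  have han : a^n * y * (a^n)⁻¹ = a^r * y * (a^r)⁻¹ := by
    rw [ean]
    calc a^r * (a^3)^q * y * (a^r * (a^3)^q)⁻¹
        = a^r * ((a^3)^q * y * ((a^3)^q)⁻¹) * (a^r)⁻¹ := by simp [pow_succ, mul_assoc]
    _ = a^r * y * (a^r)⁻¹ := by rw [hqa]
  have hbn : b^n * y * (b^n)⁻¹ = b^r * y * (b^r)⁻¹ := by
    rw [ebn]
    calc b^r * (b^3)^q * y * (b^r * (b^3)^q)⁻¹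
        = b^r * ((b^3)^q * y * ((b^3)^q)⁻¹) * (b^r)⁻¹ := by simp [pow_succ, mul_assoc]
    _ = b^r * y * (b^r)⁻¹ := by rw [hqb]
  have key : a^r * y * (a^r)⁻¹ = b^r * y * (b^r)⁻¹ := by
    rw [← han, ← hbn, hab]
  have hr12 : r = 1 ∨ r = 2 := by omega
  rcases hr12 with h | h
  · rw [h] at key
    simp only [pow_one] at key
    rw [haya, hbyb] at key
    have h1' : x * 1 = x * y⁻¹ := by rw [mul_one]; exact key
    have h2' : (1:G) = y⁻¹ := mul_left_cancel h1'
    exact inv_eq_one.mp h2'.symm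
  · rw [h] at key
    rw [ha2y, hb2y] at key
    have h' : y = y^2 := mul_right_cancel (b := x⁻¹) key
    have hyy : y * y = y := by rw [← sq]; exact h'.symm
    have h'' : y * y = 1 * y := by rw [one_mul]; exact hyy
    exact mul_right_cancel h''

theorem stmt_2 {G : Type*} [Group G] (a b : G) (n : ℕ) (hn : 0 < n) (h3 : ¬ (3 ∣ n))
    (h1 : a * b = b ^ 2 * a ^ 2) (h2 : b * a = a ^ 2 * b ^ 2) (hab : a ^ n = b ^ n) :
    b * a = 1 := by
  apply aux_stmt2 a b (a*b) (b*a) n hn h3 _ _ _ _ _ _ hab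
  · calc a*b = b^2*a^2 := h1
    _ = b*(b*a)*a := by simp [pow_succ, mul_assoc]
    _ = b*(a^2*b^2)*a := by rw [h2]
    _ = (b*a)*(a*b)*(b*a) := by simp [pow_succ, mul_assoc]
  · calc b*a = a^2*b^2 := h2
    _ = a*(a*b)*b := by simp [pow_succ, mul_assoc]
    _ = a*(b^2*a^2)*b := by rw [h1]
    _ = (a*b)*(b*a)*(a*b) := by simp [pow_succ, mul_assoc]
  · simp [pow_succ, mul_assoc]
  · calc a*(a*b)*a⁻¹ = (a^2*b^2)*(b⁻¹*a⁻¹) := by simp [pow_succ, mul_assoc]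
    _ = (b*a)*(b⁻¹*a⁻¹) := by rw [← h2]
    _ = (b*a)*(a*b)⁻¹ := by simp [pow_succ, mul_assoc]
  · simp [pow_succ, mul_assoc]
  · calc b*(b*a)*b⁻¹ = (b^2*a^2)*(a⁻¹*b⁻¹) := by simp [pow_succ, mul_assoc]
    _ = (a*b)*(a⁻¹*b⁻¹) := by rw [← h1]
    _ = (a*b)*(b*a)⁻¹ := by simp [pow_succ, mul_assoc]
end

section
/- Let G be a group and let a, b ∈ G satisfy a*b = b^2*a^2 and b*a = a^2*b^2. Then a^3 commutes with b, i.e. a^3*b = b*a^3. -/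
theorem stmt_3 {G : Type*} [Group G] (a b : G)
    (h1 : a * b = b ^ 2 * a ^ 2) (h2 : b * a = a ^ 2 * b ^ 2) :
    a ^ 3 * b = b * a ^ 3 := by
  calc a ^ 3 * b = a ^ 2 * (a * b) := by group
    _ = a ^ 2 * (b ^ 2 * a ^ 2) := by rw [h1]
    _ = (a ^ 2 * b ^ 2) * a ^ 2 := by group
    _ = (b * a) * a ^ 2 := by rw [← h2]
    _ = b * a ^ 3 := by group
end

section
/- For every n ≥ 2 with 3 not dividing n, the presented group E_{n,2} on two generators x, y with relations y^2 = x^n and y^{-1}*x*y*x = x^2*y^{-1}*x^2*y is isomorphic (as a group) to the generalized quaternion group Q_{4n} of order 4n. -/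
private theorem key_lemma {G : Type*} [Group G] {n : ℕ} (h3 : ¬ (3 ∣ n)) (X Y : G)
    (h1 : Y * Y = X ^ n) (h2 : Y⁻¹ * X * Y * X = X ^ 2 * Y⁻¹ * X ^ 2 * Y) :
    Y⁻¹ * X * Y = X⁻¹ := by
  obtain ⟨b, hb⟩ : ∃ b, b = Y⁻¹ * X * Y := ⟨_, rfl⟩
  have r1 : b * X = X * X * (b * b) := by
    rw [hb]
    calc Y⁻¹ * X * Y * X = X ^ 2 * Y⁻¹ * X ^ 2 * Y := h2
      _ = X * X * ((Y⁻¹ * X * Y) * (Y⁻¹ * X * Y)) := by simp [pow_succ, mul_assoc]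
  have hc : Y⁻¹ * b * Y = X := by
    rw [hb]
    have e : Y⁻¹ * (Y⁻¹ * X * Y) * Y = (Y * Y)⁻¹ * X * (Y * Y) := by group
    rw [e, h1]
    group
  have r2 : X * b = b * b * (X * X) := by
    calc X * b = (Y⁻¹ * b * Y) * (Y⁻¹ * X * Y) := by rw [hc, ← hb]
      _ = Y⁻¹ * (b * X) * Y := by group
      _ = Y⁻¹ * (X * X * (b * b)) * Y := by rw [r1]
      _ = ((Y⁻¹ * X * Y) * (Y⁻¹ * X * Y)) * ((Y⁻¹ * b * Y) * (Y⁻¹ * b * Y)) := by group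
      _ = b * b * (X * X) := by rw [hc, ← hb]
  have c3 : Commute (X ^ 3) b := by
    have e : b * b = X * b * (X * X)⁻¹ := by rw [r2]; group
    have e2 : b * X = X * X * (X * b * (X * X)⁻¹) := by rw [← e, r1]
    show X ^ 3 * b = b * X ^ 3
    have key : b * (X * X * X) = X * X * X * b := by
      calc b * (X * X * X) = b * X * (X * X) := by group
        _ = X * X * (X * b * (X * X)⁻¹) * (X * X) := by rw [e2]
        _ = X * X * X * b := by group
    calc X ^ 3 * b = X * X * X * b := by simp [pow_succ, mul_assoc]
      _ = b * (X * X * X) := key.symm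
      _ = b * X ^ 3 := by simp [pow_succ, mul_assoc]
  have cn : Commute (X ^ n) b := by
    show X ^ n * b = b * X ^ n
    have ca : X ^ n * b = Y * X * Y := by rw [← h1, hb]; group
    have cb : b * X ^ n = Y * X * Y := by
      rw [hb]
      calc Y⁻¹ * X * Y * X ^ n = Y⁻¹ * X * Y * (Y * Y) := by rw [h1]
        _ = Y⁻¹ * X * (Y * Y) * Y := by group
        _ = Y⁻¹ * X * X ^ n * Y := by rw [h1]
        _ = Y⁻¹ * X ^ n * X * Y := by group
        _ = Y⁻¹ * (Y * Y) * X * Y := by rw [h1]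
        _ = Y * X * Y := by group
    exact ca.trans cb.symm
  have hcop : Nat.Coprime 3 n := (Nat.Prime.coprime_iff_not_dvd Nat.prime_three).mpr h3
  have hbez : (3 : ℤ) * Nat.gcdA 3 n + (n : ℤ) * Nat.gcdB 3 n = 1 := by
    have h := Nat.gcd_eq_gcd_ab 3 n
    rw [Nat.Coprime] at hcop
    rw [hcop] at h
    push_cast at h
    linarith
  have hXb : Commute X b := by
    have hXeq : (X ^ 3) ^ (Nat.gcdA 3 n) * (X ^ n) ^ (Nat.gcdB 3 n) = X := by
      rw [← zpow_natCast X 3, ← zpow_natCast X n, ← zpow_mul, ← zpow_mul, ← zpow_add]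
      push_cast
      rw [hbez, zpow_one]
    rw [← hXeq]
    exact (c3.zpow_left _).mul_left (cn.zpow_left _)
  have e : X * b = X * (X * (b * b)) := by
    rw [hXb.eq, r1]; group
  have e' : b = X * (b * b) := mul_left_cancel e
  have e'' : X * b * b = 1 * b := by rw [mul_assoc, ← e', one_mul]
  have hXb1 : X * b = 1 := mul_right_cancel e''
  rw [← hb]
  exact (inv_eq_of_mul_eq_one_right hXb1).symm

theorem stmt_4 (n : ℕ) (hn : 2 ≤ n) (h3 : ¬ (3 ∣ n)) :
    let x : FreeGroup (Fin 2) := FreeGroup.of 0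
    let y : FreeGroup (Fin 2) := FreeGroup.of 1
    let rels : Set (FreeGroup (Fin 2)) :=
      {y⁻¹ * y⁻¹ * x ^ n, (y⁻¹ * x * y * x) * (x ^ 2 * y⁻¹ * x ^ 2 * y)⁻¹}
    Nonempty (PresentedGroup rels ≃* QuaternionGroup n) := by
  intro x y rels
  haveI hne : NeZero (2 * n) := ⟨by omega⟩
  haveI hfact : Fact (1 < 2 * n) := ⟨by omega⟩
  -- forward homomorphism
  set f : Fin 2 → QuaternionGroup n := ![.a 1, .xa 0] with hfdef
  have hf0 : f 0 = QuaternionGroup.a 1 := rfl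
  have hf1 : f 1 = QuaternionGroup.xa 0 := rfl
  have hinv : (QuaternionGroup.xa 0 : QuaternionGroup n)⁻¹ = .xa (n : ZMod (2 * n)) := by
    rw [inv_eq_iff_mul_eq_one, QuaternionGroup.xa_mul_xa, QuaternionGroup.one_def]
    congr 1
    rw [sub_zero, ← Nat.cast_add, show n + n = 2 * n by ring, ZMod.natCast_self]
  have hf : ∀ r ∈ rels, FreeGroup.lift f r = 1 := by
    intro r hr
    simp only [rels, Set.mem_insert_iff, Set.mem_singleton_iff] at hr
    rcases hr with hr | hr <;> subst hr <;>
      simp only [x, y, map_mul, map_inv, map_pow, FreeGroup.lift_apply_of, hf0, hf1, hinv]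
    · rw [QuaternionGroup.a_one_pow, QuaternionGroup.xa_mul_xa, QuaternionGroup.a_mul_a,
        QuaternionGroup.one_def]
      congr 1
      have h2n : ((2 * n : ℕ) : ZMod (2 * n)) = 0 := ZMod.natCast_self _
      push_cast at h2n ⊢
      linear_combination h2n
    · simp only [QuaternionGroup.a_one_pow, QuaternionGroup.xa_mul_a, QuaternionGroup.a_mul_xa,
        QuaternionGroup.xa_mul_xa, QuaternionGroup.a_mul_a]
      rw [mul_inv_eq_one]
      congr 1
      push_cast
      ring
  let φ : PresentedGroup rels →* QuaternionGroup n := PresentedGroup.toGroup hf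
  -- the generators of the presented group
  set X : PresentedGroup rels := PresentedGroup.of 0 with hX
  set Y : PresentedGroup rels := PresentedGroup.of 1 with hY
  have hmkx : PresentedGroup.mk rels x = X := rfl
  have hmky : PresentedGroup.mk rels y = Y := rfl
  have hrel : ∀ r ∈ rels, PresentedGroup.mk rels r = 1 := fun r hr =>
    (QuotientGroup.eq_one_iff _).mpr (Subgroup.subset_normalClosure hr)
  have e1 : Y⁻¹ * Y⁻¹ * X ^ n = 1 := by
    have h := hrel _ (Set.mem_insert _ _)
    simp only [map_mul, map_inv, map_pow, hmkx, hmky] at h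
    exact h
  have e2 : (Y⁻¹ * X * Y * X) * (X ^ 2 * Y⁻¹ * X ^ 2 * Y)⁻¹ = 1 := by
    have h := hrel _ (Set.mem_insert_iff.mpr (Or.inr rfl))
    simp only [map_mul, map_inv, map_pow, hmkx, hmky] at h
    exact h
  have h1 : Y * Y = X ^ n := by
    calc Y * Y = Y * Y * (Y⁻¹ * Y⁻¹ * X ^ n) := by rw [e1, mul_one]
      _ = X ^ n := by group
  have h2 : Y⁻¹ * X * Y * X = X ^ 2 * Y⁻¹ * X ^ 2 * Y := mul_inv_eq_one.mp e2
  have hconj : Y⁻¹ * X * Y = X⁻¹ := key_lemma h3 X Y h1 h2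
  have hXY : X * Y = Y * X⁻¹ := by
    calc X * Y = Y * (Y⁻¹ * X * Y) := by group
      _ = Y * X⁻¹ := by rw [hconj]
  have hord : X ^ (2 * n) = 1 := by
    have hc : Y⁻¹ * X ^ n * Y = (X ^ n)⁻¹ := by
      calc Y⁻¹ * X ^ n * Y = (Y⁻¹ * X * (Y⁻¹)⁻¹) ^ n := by rw [conj_pow, inv_inv]
        _ = (Y⁻¹ * X * Y) ^ n := by rw [inv_inv]
        _ = (X⁻¹) ^ n := by rw [hconj]
        _ = (X ^ n)⁻¹ := inv_pow X n
    have hc2 : Y⁻¹ * X ^ n * Y = X ^ n := by rw [← h1]; group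
    have hh : X ^ n = (X ^ n)⁻¹ := hc2.symm.trans hc
    calc X ^ (2 * n) = X ^ n * X ^ n := by rw [two_mul, pow_add]
      _ = X ^ n * (X ^ n)⁻¹ := by rw [← hh]
      _ = 1 := by group
  have pmod : ∀ a : ℕ, X ^ a = X ^ (a % (2 * n)) := by
    intro a
    conv_lhs => rw [← Nat.div_add_mod a (2 * n)]
    rw [pow_add, pow_mul, hord, one_pow, one_mul]
  have εa : ∀ i j : ZMod (2 * n), X ^ (i + j).val = X ^ i.val * X ^ j.val := by
    intro i j
    rw [ZMod.val_add, ← pow_add, ← pmod]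
  have εs : ∀ i j : ZMod (2 * n), X ^ (j - i).val = (X ^ i.val)⁻¹ * X ^ j.val := by
    intro i j
    rw [eq_inv_mul_iff_mul_eq, ← εa, add_sub_cancel]
  have ycomm : ∀ k : ℕ, X ^ k * Y = Y * (X ^ k)⁻¹ := by
    intro k
    induction k with
    | zero => simp
    | succ k ih =>
      rw [pow_succ]
      calc X ^ k * X * Y = X ^ k * (Y * X⁻¹) := by rw [mul_assoc, hXY]
        _ = (X ^ k * Y) * X⁻¹ := by rw [mul_assoc]
        _ = Y * (X ^ k)⁻¹ * X⁻¹ := by rw [ih]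
        _ = Y * (X ^ k * X)⁻¹ := by
            rw [mul_inv_rev, mul_assoc]
            congr 1
            exact ((Commute.refl X).pow_left k).inv_inv
  let ψ : QuaternionGroup n →* PresentedGroup rels :=
    { toFun := fun q => match q with
        | .a i => X ^ i.val
        | .xa i => Y * X ^ i.val
      map_one' := by
        show X ^ (0 : ZMod (2 * n)).val = 1
        rw [ZMod.val_zero, pow_zero]
      map_mul' := by
        rintro (i | i) (j | j)
        · exact εa i j
        · show Y * X ^ (j - i).val = X ^ i.val * (Y * X ^ j.val)
          rw [εs, ← mul_assoc, ← ycomm, mul_assoc]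
        · show Y * X ^ (i + j).val = (Y * X ^ i.val) * X ^ j.val
          rw [εa, mul_assoc]
        · show X ^ ((n : ZMod (2 * n)) + j - i).val = (Y * X ^ i.val) * (Y * X ^ j.val)
          have hr : ((n : ZMod (2 * n)) + j - i) = (n : ZMod (2 * n)) + (j - i) := by ring
          have hnv : ((n : ZMod (2 * n))).val = n := ZMod.val_cast_of_lt (by omega)
          rw [hr, εa, εs, hnv]
          calc X ^ n * ((X ^ i.val)⁻¹ * X ^ j.val)
              = (Y * Y) * ((X ^ i.val)⁻¹ * X ^ j.val) := by rw [h1]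
            _ = Y * (Y * (X ^ i.val)⁻¹) * X ^ j.val := by group
            _ = Y * (X ^ i.val * Y) * X ^ j.val := by rw [← ycomm]
            _ = (Y * X ^ i.val) * (Y * X ^ j.val) := by group }
  refine ⟨MonoidHom.toMulEquiv φ ψ ?_ ?_⟩
  · apply PresentedGroup.ext
    intro i
    fin_cases i
    · show ψ (φ (PresentedGroup.of 0)) = PresentedGroup.of 0
      have hφ : φ (PresentedGroup.of 0) = QuaternionGroup.a 1 := by
        simp only [φ, PresentedGroup.toGroup.of, hf0]
      rw [hφ]
      show X ^ (1 : ZMod (2 * n)).val = PresentedGroup.of 0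
      rw [ZMod.val_one, pow_one, ← hX]
    · show ψ (φ (PresentedGroup.of 1)) = PresentedGroup.of 1
      have hφ : φ (PresentedGroup.of 1) = QuaternionGroup.xa 0 := by
        simp only [φ, PresentedGroup.toGroup.of, hf1]
      rw [hφ]
      show Y * X ^ (0 : ZMod (2 * n)).val = PresentedGroup.of 1
      rw [ZMod.val_zero, pow_zero, mul_one, ← hY]
  · apply DFunLike.ext
    rintro (i | i)
    · show φ (X ^ i.val) = QuaternionGroup.a i
      rw [map_pow]
      have : φ X = QuaternionGroup.a 1 := PresentedGroup.toGroup.of hf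
      rw [this, QuaternionGroup.a_one_pow]
      congr 1
      simp [ZMod.natCast_val, ZMod.cast_id]
    · show φ (Y * X ^ i.val) = QuaternionGroup.xa i
      rw [map_mul, map_pow]
      have hx : φ X = QuaternionGroup.a 1 := PresentedGroup.toGroup.of hf
      have hy : φ Y = QuaternionGroup.xa 0 := PresentedGroup.toGroup.of hf
      rw [hx, hy, QuaternionGroup.a_one_pow, QuaternionGroup.xa_mul_a]
      congr 1
      simp [ZMod.natCast_val, ZMod.cast_id]
end

section
/- For every n ≥ 2 and every integer r, there is a surjective group homomorphism from the presented group E_{n,r} onto the generalized quaternion group Q_{4n} sending the generator x to a 1 and the generator y to xa 0; in particular the relations y^2 = x^n and y^{-1}*x*y*x^{r-1} = x^r*y^{-1}*x^2*y hold for the standard generators of Q_{4n}. -/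
open QuaternionGroup in
theorem stmt_5 (n : ℕ) (hn : 2 ≤ n) (r : ℤ) :
    let x : FreeGroup (Fin 2) := FreeGroup.of 0
    let y : FreeGroup (Fin 2) := FreeGroup.of 1
    let rels : Set (FreeGroup (Fin 2)) :=
      {y⁻¹ * y⁻¹ * x ^ n, (y⁻¹ * x * y * x ^ (r - 1)) * (x ^ r * y⁻¹ * x ^ 2 * y)⁻¹}
    let X : QuaternionGroup n := QuaternionGroup.a 1
    let Y : QuaternionGroup n := QuaternionGroup.xa 0
    (∃ f : PresentedGroup rels →* QuaternionGroup n,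
        Function.Surjective f ∧
        f (PresentedGroup.of 0) = X ∧ f (PresentedGroup.of 1) = Y) ∧
    Y ^ 2 = X ^ n ∧
    Y⁻¹ * X * Y * X ^ (r - 1) = X ^ r * Y⁻¹ * X ^ 2 * Y := by
  intro x y rels X Y
  haveI : NeZero (2 * n) := ⟨by omega⟩
  have h1 : Y ^ 2 = X ^ n := by
    rw [pow_two, QuaternionGroup.a_one_pow]
    show xa 0 * xa 0 = _
    rw [QuaternionGroup.xa_mul_xa]
    simp
  have hconj : Y⁻¹ * X * Y = X⁻¹ := by
    show xa ((n : ZMod (2*n)) + 0) * a 1 * xa 0 = a (-1)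
    rw [QuaternionGroup.xa_mul_a, QuaternionGroup.xa_mul_xa]
    congr 1
    ring
  have h2 : Y⁻¹ * X * Y * X ^ (r - 1) = X ^ r * Y⁻¹ * X ^ 2 * Y := by
    have hc2 : Y⁻¹ * X ^ 2 * Y = X⁻¹ * X⁻¹ := by
      have : Y⁻¹ * X ^ 2 * Y = (Y⁻¹ * X * Y) * (Y⁻¹ * X * Y) := by
        rw [pow_two]; group
      rw [this, hconj]
    calc Y⁻¹ * X * Y * X ^ (r - 1) = X⁻¹ * X ^ (r-1) := by rw [hconj]
      _ = X ^ r * (X⁻¹ * X⁻¹) := by group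
      _ = X ^ r * (Y⁻¹ * X ^ 2 * Y) := by rw [hc2]
      _ = X ^ r * Y⁻¹ * X ^ 2 * Y := by group
  refine ⟨?_, h1, h2⟩
  set g : Fin 2 → QuaternionGroup n := ![X, Y] with hg
  have hrel : ∀ w ∈ rels, FreeGroup.lift g w = 1 := by
    intro w hw
    rcases hw with h | h
    · subst h
      simp only [map_mul, map_inv, map_pow, FreeGroup.lift_apply_of, x, y, hg]
      show Y⁻¹ * Y⁻¹ * X ^ n = 1
      rw [← h1]
      group
    · rw [Set.mem_singleton_iff] at h
      subst h
      simp only [map_mul, map_inv, map_zpow, map_pow, FreeGroup.lift_apply_of, x, y, hg]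
      show (Y⁻¹ * X * Y * X ^ (r-1)) * (X ^ r * Y⁻¹ * X ^ 2 * Y)⁻¹ = 1
      rw [h2]
      group
  refine ⟨PresentedGroup.toGroup hrel, ?_, ?_, ?_⟩
  · intro z
    have hX : PresentedGroup.toGroup hrel (PresentedGroup.of 0) = X :=
      PresentedGroup.toGroup.of hrel
    have hY : PresentedGroup.toGroup hrel (PresentedGroup.of 1) = Y :=
      PresentedGroup.toGroup.of hrel
    rcases z with i | i
    · refine ⟨PresentedGroup.of 0 ^ i.val, ?_⟩
      rw [map_pow, hX]
      show (a 1 : QuaternionGroup n) ^ i.val = a i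
      rw [QuaternionGroup.a_one_pow, ZMod.natCast_val, ZMod.cast_id]
    · refine ⟨PresentedGroup.of 1 * PresentedGroup.of 0 ^ i.val, ?_⟩
      rw [map_mul, map_pow, hX, hY]
      show (xa 0 : QuaternionGroup n) * a 1 ^ i.val = xa i
      rw [QuaternionGroup.a_one_pow, QuaternionGroup.xa_mul_a, zero_add,
        ZMod.natCast_val, ZMod.cast_id]
  · exact PresentedGroup.toGroup.of hrel
  · exact PresentedGroup.toGroup.of hrel
end

section
/- In the polynomial ring ℤ[X], the constant polynomial 4 lies in the ideal generated by X^3 − X − 1 and X^14 − 1; equivalently, there exist polynomials p, q ∈ ℤ[X] with p*(X^3 − X − 1) + q*(X^14 − 1) = 4. (Hence in ℤ[X]/(X^14 − 1) the ideal generated by X^3 − X − 1 contains 4.) -/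
open Polynomial

theorem stmt_6 :
    (4 : Polynomial ℤ) ∈ Ideal.span ({X ^ 3 - X - 1, X ^ 14 - 1} : Set (Polynomial ℤ)) ∧
    ∃ p q : Polynomial ℤ, p * (X ^ 3 - X - 1) + q * (X ^ 14 - 1) = 4 := by
  have key : (-1 - X^2 - X^5 + X^6 - X^7 + X^9 - 2*X^10 + 2*X^11 - X^12 - X^13 : Polynomial ℤ)
      * (X ^ 3 - X - 1) + (X^2 + X - 3) * (X ^ 14 - 1) = 4 := by ring
  constructor
  · have h1 : (X ^ 3 - X - 1 : Polynomial ℤ) ∈ Ideal.span ({X ^ 3 - X - 1, X ^ 14 - 1} : Set (Polynomial ℤ)) :=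
      Ideal.subset_span (by simp)
    have h2 : (X ^ 14 - 1 : Polynomial ℤ) ∈ Ideal.span ({X ^ 3 - X - 1, X ^ 14 - 1} : Set (Polynomial ℤ)) :=
      Ideal.subset_span (by simp)
    rw [← key]
    exact add_mem (Ideal.mul_mem_left _ _ h1) (Ideal.mul_mem_left _ _ h2)
  · exact ⟨_, _, key⟩
end

section
/- In the integral group ring ℤ[Q_28], the right annihilator of x^3 − x − 1 is zero: for every b ∈ ℤ[Q_28], if (x^3 − x − 1)*b = 0 then b = 0. -/
/-!
Let `p = X³ - X - 1`. Over `ℤ`, `p` times an explicit polynomial `q` is `4` modulo `X¹⁴ - 1`.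
Since `x¹⁴ = 1` in `ℤ[Q₂₈]`, this gives `q(x) · p(x) = 4`, so `p(x) * b = 0` forces `4 • b = 0`,
and `ℤ[Q₂₈]` has no additive torsion.
-/

open Polynomial

theorem isLeftRegular_of_mul_eq_natCast {R : Type*} [Ring R] [IsAddTorsionFree R] {a c : R}
    {n : ℕ} (hn : n ≠ 0) (h : c * a = n) : IsLeftRegular a := by
  have hreg : IsLeftRegular (n : R) := fun y z hyz ↦
    nsmul_right_injective hn (by simpa only [nsmul_eq_mul] using hyz)
  exact IsLeftRegular.of_mul (h ▸ hreg)

theorem exists_mul_pow_three_sub_self_sub_one_eq_four {R : Type*} [Ring R] {x : R}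
    (hx : x ^ 14 = 1) : ∃ c : R, c * (x ^ 3 - x - 1) = 4 := by
  let q : ℤ[X] :=
    -1 - X ^ 2 - X ^ 5 + X ^ 6 - X ^ 7 + X ^ 9 - 2 * X ^ 10 + 2 * X ^ 11 - X ^ 12 - X ^ 13
  have hq : q * (X ^ 3 - X - 1) = 4 + (3 - X - X ^ 2) * (X ^ 14 - 1) := by ring
  refine ⟨aeval x q, ?_⟩
  simpa only [map_mul, map_add, map_sub, map_pow, map_one, map_ofNat, aeval_X, hx, sub_self,
    mul_zero, add_zero] using congrArg (aeval x) hq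

theorem isLeftRegular_pow_three_sub_self_sub_one {R : Type*} [Ring R] [IsAddTorsionFree R] {x : R}
    (hx : x ^ 14 = 1) : IsLeftRegular (x ^ 3 - x - 1) := by
  obtain ⟨c, hc⟩ := exists_mul_pow_three_sub_self_sub_one_eq_four hx
  exact isLeftRegular_of_mul_eq_natCast four_ne_zero (by exact_mod_cast hc)

theorem QuaternionGroup.of_a_one_pow_two_mul (k : Type*) [Semiring k] (n : ℕ) :
    MonoidAlgebra.of k (QuaternionGroup n) (a 1) ^ (2 * n) = 1 := by
  rw [← map_pow, a_one_pow, ZMod.natCast_self, ← one_def, map_one]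

theorem stmt_8 :
    let x : MonoidAlgebra ℤ (QuaternionGroup 7) :=
      MonoidAlgebra.of ℤ (QuaternionGroup 7) (QuaternionGroup.a 1)
    ∀ b : MonoidAlgebra ℤ (QuaternionGroup 7), (x ^ 3 - x - 1) * b = 0 → b = 0 := by
  intro x b hb
  have : IsAddTorsionFree (MonoidAlgebra ℤ (QuaternionGroup 7)) := .of_isTorsionFree ℤ _
  have hx : x ^ 14 = 1 := QuaternionGroup.of_a_one_pow_two_mul ℤ 7
  exact (isLeftRegular_pow_three_sub_self_sub_one hx).mul_left_eq_zero_iff.mp hb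
end

section
/- In the integral group ring ℤ[Q_28], each of the three elements γ = 4, γ = φ₁ := x^6 + x^5 − x^4 − 3x^3 − x^2 + x + 1, and γ = φ₂ := 2 + 2x − x^3 + x^3*y admits an element b ∈ ℤ[Q_28] with (1 − y*x)*γ = (x^3 − x − 1)*b. -/
open Polynomial in
private lemma stmt_12_helper {R : Type*} [Ring R] (t : R) (ht : t ^ 14 = 1) (p q s : ℤ[X])
    (h : (X ^ 3 - X - 1) * p = q + (X ^ 14 - 1) * s) :
    (t ^ 3 - t - 1) * aeval t p = aeval t q := by
  have h2 := congrArg (aeval t) h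
  simp only [map_mul, map_add, map_sub, map_pow, map_one, aeval_X] at h2
  rw [h2, ht, sub_self, zero_mul, add_zero]

set_option maxHeartbeats 1000000 in
theorem stmt_12 :
    let x : MonoidAlgebra ℤ (QuaternionGroup 7) :=
      MonoidAlgebra.of ℤ (QuaternionGroup 7) (QuaternionGroup.a 1)
    let y : MonoidAlgebra ℤ (QuaternionGroup 7) :=
      MonoidAlgebra.of ℤ (QuaternionGroup 7) (QuaternionGroup.xa 0)
    let φ₁ : MonoidAlgebra ℤ (QuaternionGroup 7) :=
      x ^ 6 + x ^ 5 - x ^ 4 - 3 * x ^ 3 - x ^ 2 + x + 1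
    let φ₂ : MonoidAlgebra ℤ (QuaternionGroup 7) := 2 + 2 * x - x ^ 3 + x ^ 3 * y
    (∃ b : MonoidAlgebra ℤ (QuaternionGroup 7),
        (1 - y * x) * 4 = (x ^ 3 - x - 1) * b) ∧
    (∃ b : MonoidAlgebra ℤ (QuaternionGroup 7),
        (1 - y * x) * φ₁ = (x ^ 3 - x - 1) * b) ∧
    (∃ b : MonoidAlgebra ℤ (QuaternionGroup 7),
        (1 - y * x) * φ₂ = (x ^ 3 - x - 1) * b) := by
  intro x y φ₁ φ₂
  have hx : x ^ 14 = 1 := by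
    simp only [x, ← map_pow]
    rw [show (QuaternionGroup.a 1 : QuaternionGroup 7) ^ 14 = 1 from by decide, map_one]
  have hrel : ∀ (k m : ℕ), (QuaternionGroup.xa 0 : QuaternionGroup 7) * (QuaternionGroup.a 1) ^ k
        = (QuaternionGroup.a 1) ^ m * QuaternionGroup.xa 0 →
      y * x ^ k = x ^ m * y := by
    intro k m hgh
    simp only [x, y, ← map_pow, ← map_mul, hgh]
  have hy1 : y * x = x ^ 13 * y := by
    have := hrel 1 13 (by decide); simpa using this
  have hy2 : y * x ^ 2 = x ^ 12 * y := hrel 2 12 (by decide)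
  have hy3 : y * x ^ 3 = x ^ 11 * y := hrel 3 11 (by decide)
  have hy4 : y * x ^ 4 = x ^ 10 * y := hrel 4 10 (by decide)
  have hy5 : y * x ^ 5 = x ^ 9 * y := hrel 5 9 (by decide)
  have hy6 : y * x ^ 6 = x ^ 8 * y := hrel 6 8 (by decide)
  have hy7 : y * x ^ 7 = x ^ 7 * y := hrel 7 7 (by decide)
  have hmix : y * (x ^ 4 * y) = x ^ 3 := by
    simp only [x, y, ← map_pow, ← map_mul]
    rw [show QuaternionGroup.xa 0 * ((QuaternionGroup.a 1) ^ 4 * QuaternionGroup.xa 0)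
        = (QuaternionGroup.a 1) ^ 3 from by decide]
  refine ⟨⟨(-1 - x ^ 2 - x ^ 5 + x ^ 6 - x ^ 7 + x ^ 9 - 2 * x ^ 10 + 2 * x ^ 11 - x ^ 12 - x ^ 13)
      + (x + x ^ 4 - x ^ 5 + x ^ 6 - x ^ 8 + 2 * x ^ 9 - 2 * x ^ 10 + x ^ 11 + x ^ 12 + x ^ 13) * y, ?_⟩,
    ⟨(-1 + x ^ 2 + x ^ 3) + (x ^ 7 - x ^ 9 - x ^ 10) * y, ?_⟩,
    ⟨(-2) + (1 - x ^ 10 + x ^ 11 + x ^ 12) * y, ?_⟩⟩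
  · -- case γ = 4
    have h1P : (x ^ 3 - x - 1) * (-1 - x ^ 2 - x ^ 5 + x ^ 6 - x ^ 7 + x ^ 9 - 2 * x ^ 10
        + 2 * x ^ 11 - x ^ 12 - x ^ 13) = 4 * 1 := by
      rw [mul_one]
      have := stmt_12_helper x hx
        (-1 - Polynomial.X ^ 2 - Polynomial.X ^ 5 + Polynomial.X ^ 6 - Polynomial.X ^ 7
          + Polynomial.X ^ 9 - 2 * Polynomial.X ^ 10 + 2 * Polynomial.X ^ 11 - Polynomial.X ^ 12
          - Polynomial.X ^ 13) 4 (3 - Polynomial.X - Polynomial.X ^ 2) (by ring)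
      simpa [map_ofNat] using this
    have h1Q : (x ^ 3 - x - 1) * (x + x ^ 4 - x ^ 5 + x ^ 6 - x ^ 8 + 2 * x ^ 9 - 2 * x ^ 10
        + x ^ 11 + x ^ 12 + x ^ 13) = -(4 * x ^ 13) := by
      have := stmt_12_helper x hx
        (Polynomial.X + Polynomial.X ^ 4 - Polynomial.X ^ 5 + Polynomial.X ^ 6 - Polynomial.X ^ 8
          + 2 * Polynomial.X ^ 9 - 2 * Polynomial.X ^ 10 + Polynomial.X ^ 11 + Polynomial.X ^ 12
          + Polynomial.X ^ 13) (-(4 * Polynomial.X ^ 13)) (Polynomial.X + Polynomial.X ^ 2)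
        (by ring)
      simpa [map_ofNat] using this
    rw [mul_add, ← mul_assoc, h1P, h1Q, hy1]
    noncomm_ring
  · -- case γ = φ₁
    have h2P : (x ^ 3 - x - 1) * (-1 + x ^ 2 + x ^ 3)
        = x ^ 6 + x ^ 5 - x ^ 4 - 3 * x ^ 3 - x ^ 2 + x + 1 := by
      noncomm_ring
    have h2Q : (x ^ 3 - x - 1) * (x ^ 7 - x ^ 9 - x ^ 10)
        = -x ^ 7 - x ^ 8 + x ^ 9 + 3 * x ^ 10 + x ^ 11 - x ^ 12 - x ^ 13 := by
      noncomm_ring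
    conv_rhs => rw [mul_add, ← mul_assoc]
    rw [h2P, h2Q,
      show (1 - y * x) * φ₁ = φ₁ - (y * x ^ 7 + y * x ^ 6 - y * x ^ 5
          - (y * x ^ 4 + y * x ^ 4 + y * x ^ 4) - y * x ^ 3 + y * x ^ 2 + y * x) from by
        simp only [φ₁]; noncomm_ring,
      hy7, hy6, hy5, hy4, hy3, hy2, hy1]
    simp only [φ₁]
    noncomm_ring
  · -- case γ = φ₂
    have h3P : (x ^ 3 - x - 1) * (-2 : MonoidAlgebra ℤ (QuaternionGroup 7))
        = 2 * 1 + 2 * x - 2 * x ^ 3 := by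
      noncomm_ring
    have h3Q : (x ^ 3 - x - 1) * (1 - x ^ 10 + x ^ 11 + x ^ 12)
        = x ^ 3 + x ^ 10 - 2 * x ^ 12 - 2 * x ^ 13 := by
      have := stmt_12_helper x hx
        (1 - Polynomial.X ^ 10 + Polynomial.X ^ 11 + Polynomial.X ^ 12)
        (Polynomial.X ^ 3 + Polynomial.X ^ 10 - 2 * Polynomial.X ^ 12 - 2 * Polynomial.X ^ 13)
        (1 + Polynomial.X) (by ring)
      simpa [map_ofNat] using this
    have hφ₂ : φ₂ = 2 * 1 + 2 * x - x ^ 3 + x ^ 3 * y := by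
      simp only [φ₂, mul_one]
    conv_rhs => rw [mul_add, ← mul_assoc]
    rw [h3P, h3Q, hφ₂,
      show (1 - y * x) * (2 * 1 + 2 * x - x ^ 3 + x ^ 3 * y : MonoidAlgebra ℤ (QuaternionGroup 7))
          = (2 * 1 + 2 * x - x ^ 3 + x ^ 3 * y)
            - ((y * x + y * x) + (y * (x ^ 2) + y * (x ^ 2)) - y * x ^ 4 + y * (x ^ 4 * y)) from by
        noncomm_ring,
      hy1, hy2, hy4, hmix]
    noncomm_ring
end
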